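/- Suppose R_adv is L_adv-smooth and R_real is L_real-smooth, and let θ₁, θ₂ ∈ F satisfy ∇R₁(θ₁) = 0 and ∇R₂(θ₂) = 0. Set L₁ = β·L_adv + (1−β)·L_real and L₂ = (1−β)·L_adv + β·L_real. Then for every λ ∈ [0,1], ‖∇R_μ(θ(λ))‖ ≤ max(|c₁|·L₁, |c₂|·L₂) · ‖θ₂ − θ₁‖. -/

import Mathlib

/-! Since `2β - 1 ≠ 0`, the user reward is the affine combination `R_μ = c₁ R₁ + c₂ R₂` of the
two experts. The gradient of `R_i` is `L_i`-Lipschitz and vanishes at `θ_i`, so at `θ(λ)` its norm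
is at most `L₁ (1 - λ) ‖θ₂ - θ₁‖`, resp. `L₂ λ ‖θ₂ - θ₁‖`. The triangle inequality then bounds
`‖∇R_μ(θ(λ))‖` by a convex combination of `|c₁| L₁` and `|c₂| L₂`, times `‖θ₂ - θ₁‖`. -/

open InnerProductSpace Set

theorem gradient_const_mul_add_const_mul {F : Type*} [NormedAddCommGroup F]
    [InnerProductSpace ℝ F] [CompleteSpace F] {f g : F → ℝ} {x : F}
    (hf : DifferentiableAt ℝ f x) (hg : DifferentiableAt ℝ g x) (a b : ℝ) :
    gradient (fun y => a * f y + b * g y) x = a • gradient f x + b • gradient g x := by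
  have hderiv : HasFDerivAt (fun y => a * f y + b * g y)
      (toDual ℝ F (a • gradient f x + b • gradient g x)) x := by
    rw [map_add, map_smul, map_smul]
    exact (hf.hasGradientAt.hasFDerivAt.const_mul a).add (hg.hasGradientAt.hasFDerivAt.const_mul b)
  rw [hderiv.hasGradientAt.gradient, LinearIsometryEquiv.symm_apply_apply]

section Combination

variable {X E : Type*} [SeminormedAddCommGroup X] [SeminormedAddCommGroup E] [NormedSpace ℝ E]

theorem norm_smul_add_smul_sub_le {G H : X → E} {LG LH a b : ℝ}
    (hG : ∀ x y, ‖G x - G y‖ ≤ LG * ‖x - y‖) (hH : ∀ x y, ‖H x - H y‖ ≤ LH * ‖x - y‖)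
    (ha : 0 ≤ a) (hb : 0 ≤ b) (x y : X) :
    ‖(a • G x + b • H x) - (a • G y + b • H y)‖ ≤ (a * LG + b * LH) * ‖x - y‖ := by
  calc ‖(a • G x + b • H x) - (a • G y + b • H y)‖
      = ‖a • (G x - G y) + b • (H x - H y)‖ := by congr 1; module
    _ ≤ a * ‖G x - G y‖ + b * ‖H x - H y‖ := by
      refine (norm_add_le _ _).trans_eq ?_
      rw [norm_smul_of_nonneg ha, norm_smul_of_nonneg hb]
    _ ≤ a * (LG * ‖x - y‖) + b * (LH * ‖x - y‖) := by gcongr <;> apply_assumption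
    _ = (a * LG + b * LH) * ‖x - y‖ := by ring

theorem norm_smul_add_smul_le_max_mul {u v : E} {c₁ c₂ A B l d : ℝ} (hl : l ∈ Icc (0 : ℝ) 1)
    (hd : 0 ≤ d) (hu : ‖u‖ ≤ A * ((1 - l) * d)) (hv : ‖v‖ ≤ B * (l * d)) :
    ‖c₁ • u + c₂ • v‖ ≤ max (|c₁| * A) (|c₂| * B) * d := by
  obtain ⟨hl₀, hl₁⟩ := hl
  calc ‖c₁ • u + c₂ • v‖ ≤ |c₁| * ‖u‖ + |c₂| * ‖v‖ := by
        refine (norm_add_le _ _).trans_eq ?_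
        rw [norm_smul, norm_smul, Real.norm_eq_abs, Real.norm_eq_abs]
    _ ≤ |c₁| * (A * ((1 - l) * d)) + |c₂| * (B * (l * d)) := by gcongr
    _ = ((1 - l) • (|c₁| * A) + l • (|c₂| * B)) * d := by simp only [smul_eq_mul]; ring
    _ ≤ max (|c₁| * A) (|c₂| * B) * d := by
        gcongr
        exact Convex.combo_le_max _ _ (by linarith) hl₀ (by ring)

end Combination

theorem smul_add_smul_eq_combo_of_swapped_weights {M : Type*} [AddCommGroup M] [Module ℝ M]
    {β : ℝ} (hβ : 2 * β - 1 ≠ 0) (μ : ℝ) (a r : M) :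
    μ • a + (1 - μ) • r =
      ((μ + β - 1) / (2 * β - 1)) • (β • a + (1 - β) • r) +
        ((β - μ) / (2 * β - 1)) • ((1 - β) • a + β • r) := by
  match_scalars <;>
    rw [div_mul_eq_mul_div, div_mul_eq_mul_div, ← add_div, eq_div_iff hβ] <;> ring

section Segment

variable {V : Type*} [SeminormedAddCommGroup V] [NormedSpace ℝ V]

theorem norm_smul_add_smul_sub_left (p q : V) {l : ℝ} (hl : 0 ≤ l) :
    ‖(1 - l) • p + l • q - p‖ = l * ‖p - q‖ := by
  rw [show (1 - l) • p + l • q - p = l • (q - p) by module, norm_smul_of_nonneg hl, norm_sub_rev]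

theorem norm_smul_add_smul_sub_right (p q : V) {l : ℝ} (hl : l ≤ 1) :
    ‖(1 - l) • p + l • q - q‖ = (1 - l) * ‖p - q‖ := by
  rw [show (1 - l) • p + l • q - q = (1 - l) • (p - q) by module,
    norm_smul_of_nonneg (sub_nonneg.2 hl)]

end Segment

theorem user_gradient_bound_at_interpolation_general
    {F : Type*} [NormedAddCommGroup F] [InnerProductSpace ℝ F] [CompleteSpace F]
    (R_adv R_real : F → ℝ)
    (hadv : Differentiable ℝ R_adv) (hreal : Differentiable ℝ R_real)
    (β μ : ℝ) (hβ : β ∈ Set.Ioc (1 / 2 : ℝ) 1)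
    (L_adv L_real : ℝ)
    (hL_adv : ∀ a b : F, ‖gradient R_adv a - gradient R_adv b‖ ≤ L_adv * ‖a - b‖)
    (hL_real : ∀ a b : F, ‖gradient R_real a - gradient R_real b‖ ≤ L_real * ‖a - b‖)
    (R₁ R₂ Rμ : F → ℝ)
    (hR₁ : R₁ = fun θ => β * R_adv θ + (1 - β) * R_real θ)
    (hR₂ : R₂ = fun θ => (1 - β) * R_adv θ + β * R_real θ)
    (hRμ : Rμ = fun θ => μ * R_adv θ + (1 - μ) * R_real θ)
    (c₁ c₂ L₁ L₂ : ℝ)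
    (hc₁ : c₁ = (μ + β - 1) / (2 * β - 1)) (hc₂ : c₂ = (β - μ) / (2 * β - 1))
    (hL₁ : L₁ = β * L_adv + (1 - β) * L_real) (hL₂ : L₂ = (1 - β) * L_adv + β * L_real)
    (θ₁ θ₂ : F) (h₁ : gradient R₁ θ₁ = 0) (h₂ : gradient R₂ θ₂ = 0)
    (l : ℝ) (hl : l ∈ Set.Icc (0 : ℝ) 1) :
    ‖gradient Rμ ((1 - l) • θ₂ + l • θ₁)‖ ≤ max (|c₁| * L₁) (|c₂| * L₂) * ‖θ₂ - θ₁‖ := by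
  obtain ⟨hβ_gt, hβ_le⟩ := hβ
  have hβ₀ : 0 ≤ β := by linarith
  have hβ₁ : 0 ≤ 1 - β := by linarith
  subst hR₁ hR₂ hRμ hc₁ hc₂ hL₁ hL₂
  simp only [gradient_const_mul_add_const_mul hadv.differentiableAt hreal.differentiableAt]
    at h₁ h₂ ⊢
  rw [smul_add_smul_eq_combo_of_swapped_weights (by linarith : 2 * β - 1 ≠ 0)]
  apply norm_smul_add_smul_le_max_mul hl (norm_nonneg _)
  · rw [← norm_smul_add_smul_sub_right θ₂ θ₁ hl.2]
    simpa only [h₁, sub_zero] using norm_smul_add_smul_sub_le hL_adv hL_real hβ₀ hβ₁ _ θ₁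
  · rw [← norm_smul_add_smul_sub_left θ₂ θ₁ hl.1]
    simpa only [h₂, sub_zero] using norm_smul_add_smul_sub_le hL_adv hL_real hβ₁ hβ₀ _ θ₂

/-- If `R_adv` is `L_adv`-smooth and `R_real` is `L_real`-smooth, and `θ₁, θ₂` satisfy
`∇R₁(θ₁) = 0` and `∇R₂(θ₂) = 0`, then with `L₁ = β·L_adv + (1−β)·L_real` and
`L₂ = (1−β)·L_adv + β·L_real`, for every `λ ∈ [0,1]`,
`‖∇R_μ(θ(λ))‖ ≤ max(|c₁|·L₁, |c₂|·L₂) · ‖θ₂ − θ₁‖`. -/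
theorem user_gradient_bound_at_interpolation
    {F : Type*} [NormedAddCommGroup F] [InnerProductSpace ℝ F] [CompleteSpace F]
    (R_adv R_real : F → ℝ)
    (hadv : Differentiable ℝ R_adv) (hreal : Differentiable ℝ R_real)
    (β μ : ℝ) (hβ : β ∈ Set.Ioc (1 / 2 : ℝ) 1) (hμ : μ ∈ Set.Icc (0 : ℝ) 1)
    (L_adv L_real : ℝ)
    (hL_adv : ∀ a b : F, ‖gradient R_adv a - gradient R_adv b‖ ≤ L_adv * ‖a - b‖)
    (hL_real : ∀ a b : F, ‖gradient R_real a - gradient R_real b‖ ≤ L_real * ‖a - b‖)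
    (R₁ R₂ Rμ : F → ℝ)
    (hR₁ : R₁ = fun θ => β * R_adv θ + (1 - β) * R_real θ)
    (hR₂ : R₂ = fun θ => (1 - β) * R_adv θ + β * R_real θ)
    (hRμ : Rμ = fun θ => μ * R_adv θ + (1 - μ) * R_real θ)
    (c₁ c₂ L₁ L₂ : ℝ)
    (hc₁ : c₁ = (μ + β - 1) / (2 * β - 1)) (hc₂ : c₂ = (β - μ) / (2 * β - 1))
    (hL₁ : L₁ = β * L_adv + (1 - β) * L_real) (hL₂ : L₂ = (1 - β) * L_adv + β * L_real)
    (θ₁ θ₂ : F) (h₁ : gradient R₁ θ₁ = 0) (h₂ : gradient R₂ θ₂ = 0)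
    (l : ℝ) (hl : l ∈ Set.Icc (0 : ℝ) 1) :
    ‖gradient Rμ ((1 - l) • θ₂ + l • θ₁)‖ ≤ max (|c₁| * L₁) (|c₂| * L₂) * ‖θ₂ - θ₁‖ :=
  user_gradient_bound_at_interpolation_general R_adv R_real hadv hreal β μ hβ L_adv L_real hL_adv
    hL_real R₁ R₂ Rμ hR₁ hR₂ hRμ c₁ c₂ L₁ L₂ hc₁ hc₂ hL₁ hL₂ θ₁ θ₂ h₁ h₂ l hl
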